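/- For every prime p ≥ 5 and every τ in the complex upper half-plane, (1/p)·Σ_{j=0}^{p−1} g₀((τ + 24j)/p) = p·χ₆(p)·g₀(pτ), where χ₆(p) := 1 if p ≡ 1 (mod 6) and χ₆(p) := −1 if p ≡ 5 (mod 6). -/

import Mathlib

/-!
With `m = 3n + 1`, the `n`-th term of `g₀(τ)` is `±(m/3)·e^{πi m² τ/3}`. Replacing `τ` by
`(τ + 24j)/p` multiplies it by `ζ^{4m²j}` with `ζ = e^{2πi/p}`, so averaging over `j` keeps
exactly the terms with `p ∣ m`. These are the `m = χ₆(p)·p·m'` with `m' ≡ 1 (mod 3)`; since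
`χ₆(p)·p ≡ 1 (mod 6)` the sign `(-1)ⁿ` is unchanged, and the term becomes `χ₆(p)·p` times the
`m'`-term of `g₀(pτ)`.
-/

open Complex

/-- The theta series `g₀(τ) = Σ_{n∈ℤ} (−1)ⁿ·(n + 1/3)·e^{3πi(n+1/3)²τ}`, absolutely
convergent for `Im τ > 0`. -/
noncomputable def g₀ (τ : ℂ) : ℂ :=
  ∑' n : ℤ, (-1 : ℂ) ^ n * ((n : ℂ) + 1 / 3) *
    Complex.exp (3 * Real.pi * I * ((n : ℂ) + 1 / 3) ^ 2 * τ)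

/-- `χ₆(p) = 1` if `p ≡ 1 (mod 6)`, `−1` if `p ≡ 5 (mod 6)`, and `0` otherwise. -/
def χ₆ (p : ℕ) : ℤ := if p % 6 = 1 then 1 else if p % 6 = 5 then -1 else 0

noncomputable def g₀Term (n : ℤ) (τ : ℂ) : ℂ :=
  (-1 : ℂ) ^ n * ((n : ℂ) + 1 / 3) * cexp (3 * Real.pi * I * ((n : ℂ) + 1 / 3) ^ 2 * τ)

lemma g₀_eq_tsum_g₀Term (τ : ℂ) : g₀ τ = ∑' n : ℤ, g₀Term n τ := rfl

lemma g₀Term_eq_mul_jacobiTheta₂_term (n : ℤ) (τ : ℂ) :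
    g₀Term n τ = cexp (Real.pi * I * τ / 3) *
      (((n : ℂ) + 1 / 3) * jacobiTheta₂_term n (τ + 1 / 2) (3 * τ)) := by
  have hsign : (-1 : ℂ) ^ n = cexp (Real.pi * I * n) := by
    rw [mul_comm, exp_int_mul, exp_pi_mul_I]
  rw [g₀Term, jacobiTheta₂_term, hsign]
  calc cexp (Real.pi * I * n) * ((n : ℂ) + 1 / 3) *
        cexp (3 * Real.pi * I * ((n : ℂ) + 1 / 3) ^ 2 * τ)
      = ((n : ℂ) + 1 / 3) * (cexp (Real.pi * I * τ / 3) *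
          cexp (2 * Real.pi * I * n * (τ + 1 / 2) + Real.pi * I * n ^ 2 * (3 * τ))) := by
        rw [← exp_add, mul_right_comm, ← exp_add]; ring_nf
    _ = _ := by ring

lemma summable_g₀Term {τ : ℂ} (hτ : 0 < τ.im) : Summable fun n : ℤ ↦ g₀Term n τ := by
  have h3τ : 0 < (3 * τ).im := by simpa using hτ
  have hθ := (summable_jacobiTheta₂_term_iff (τ + 1 / 2) (3 * τ)).mpr h3τ
  have hθ' := (summable_jacobiTheta₂'_term_iff (τ + 1 / 2) (3 * τ)).mpr h3τ
  have hπ : (2 * Real.pi * I : ℂ) ≠ 0 := by simp [Real.pi_ne_zero]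
  refine (((hθ'.div_const (2 * Real.pi * I)).add (hθ.mul_left (1 / 3))).mul_left
    (cexp (Real.pi * I * τ / 3))).congr fun n ↦ ?_
  rw [g₀Term_eq_mul_jacobiTheta₂_term, jacobiTheta₂'_term]
  field_simp

lemma IsPrimitiveRoot.sum_range_zpow_pow {K : Type*} [Field K] {ζ : K} {p : ℕ}
    (hζ : IsPrimitiveRoot ζ p) (a : ℤ) :
    ∑ j ∈ Finset.range p, (ζ ^ a) ^ j = if (p : ℤ) ∣ a then (p : K) else 0 := by
  split_ifs with hdvd
  · simp [(hζ.zpow_eq_one_iff_dvd a).mpr hdvd]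
  · have hne : ζ ^ a ≠ 1 := mt (hζ.zpow_eq_one_iff_dvd a).mp hdvd
    rw [geom_sum_eq hne, ← zpow_natCast, ← zpow_mul, mul_comm, zpow_mul, zpow_natCast,
      hζ.pow_eq_one, one_zpow, sub_self, zero_div]

lemma g₀Term_add_mul_div (n : ℤ) (τ : ℂ) {p : ℕ} (hp : p ≠ 0) (j : ℕ) :
    g₀Term n ((τ + 24 * j) / p) =
      g₀Term n (τ / p) * (cexp (2 * Real.pi * I / p) ^ (4 * (3 * n + 1) ^ 2)) ^ j := by
  have hexp : 3 * Real.pi * I * ((n : ℂ) + 1 / 3) ^ 2 * ((τ + 24 * j) / p) =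
      3 * Real.pi * I * ((n : ℂ) + 1 / 3) ^ 2 * (τ / p) +
        ((4 * (3 * n + 1) ^ 2 * j : ℤ) : ℂ) * (2 * Real.pi * I / p) := by
    push_cast
    field_simp
    ring
  rw [← zpow_natCast, ← zpow_mul, ← exp_int_mul, g₀Term, g₀Term, hexp, exp_add]
  ring

lemma sum_range_g₀Term_add_mul_div (n : ℤ) (τ : ℂ) {p : ℕ} (hp : p.Prime) (hp2 : p ≠ 2) :
    ∑ j ∈ Finset.range p, g₀Term n ((τ + 24 * j) / p) =
      if (p : ℤ) ∣ 3 * n + 1 then p * g₀Term n (τ / p) else 0 := by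
  have hpZ : Prime (p : ℤ) := Nat.prime_iff_prime_int.mp hp
  have hp4 : ¬ (p : ℤ) ∣ 4 := fun h ↦ by
    have : p ∣ 2 ^ 2 := by exact_mod_cast h
    exact hp2 ((Nat.prime_dvd_prime_iff_eq hp Nat.prime_two).mp (hp.dvd_of_dvd_pow this))
  have hdvd_iff : (p : ℤ) ∣ 4 * (3 * n + 1) ^ 2 ↔ (p : ℤ) ∣ 3 * n + 1 :=
    ⟨fun h ↦ hpZ.dvd_of_dvd_pow ((hpZ.dvd_or_dvd h).resolve_left hp4),
      fun h ↦ (dvd_pow h two_ne_zero).mul_left 4⟩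
  simp_rw [g₀Term_add_mul_div n τ hp.ne_zero, ← Finset.mul_sum,
    (isPrimitiveRoot_exp p hp.ne_zero).sum_range_zpow_pow, hdvd_iff]
  split_ifs <;> ring

lemma g₀Term_mul_add {a c : ℤ} (hc : 3 * c + 1 = a) (hc_even : Even c) (k : ℤ) (τ : ℂ) :
    g₀Term (a * k + c) τ = a * g₀Term k (a ^ 2 * τ) := by
  have hsign : (-1 : ℂ) ^ (a * k + c) = (-1 : ℂ) ^ k := by
    have hpar : a * k + c - k = c * (3 * k + 1) := by linear_combination -k * hc
    rw [← sub_add_cancel (a * k + c) k, zpow_add₀ (by norm_num), hpar,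
      (hc_even.mul_right _).neg_one_zpow, one_mul]
  have hshift : ((a * k + c : ℤ) : ℂ) + 1 / 3 = a * ((k : ℂ) + 1 / 3) := by
    have := congrArg (fun x : ℤ ↦ (x : ℂ)) hc
    push_cast at this ⊢
    linear_combination this / 3
  rw [g₀Term, g₀Term, hsign, hshift]
  ring_nf

lemma tsum_ite_dvd_three_mul_add_one {M : Type*} [AddCommMonoid M] [TopologicalSpace M]
    {a c : ℤ} (ha : a ≠ 0) (hc : 3 * c + 1 = a) (F : ℤ → M) :
    ∑' n : ℤ, (if a ∣ 3 * n + 1 then F n else 0) = ∑' k : ℤ, F (a * k + c) := by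
  have hinj : Function.Injective fun k : ℤ ↦ a * k + c :=
    fun k l hkl ↦ mul_left_cancel₀ ha (add_right_cancel hkl)
  have hdvd (k : ℤ) : a ∣ 3 * (a * k + c) + 1 := ⟨3 * k + 1, by linear_combination hc⟩
  rw [← hinj.tsum_eq]
  · simp only [hdvd, if_true]
  · intro n hn
    obtain ⟨s, hs⟩ : a ∣ 3 * n + 1 := by by_contra h; simp [h] at hn
    -- reducing `3 n + 1 = a s` mod 3 gives `s ≡ 1 (mod 3)`
    obtain ⟨k, hk⟩ : (3 : ℤ) ∣ s - 1 := ⟨n - c * s, by linear_combination s * hc - hs⟩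
    exact ⟨k, mul_left_cancel₀ three_ne_zero (by linear_combination hc - hs - a * hk)⟩

lemma Nat.Prime.mod_six_eq_one_or_five {p : ℕ} (hp : p.Prime) (hp5 : 5 ≤ p) :
    p % 6 = 1 ∨ p % 6 = 5 := by
  have h2 : ¬ 2 ∣ p := fun h ↦ by
    have := (Nat.prime_dvd_prime_iff_eq Nat.prime_two hp).mp h; omega
  have h3 : ¬ 3 ∣ p := fun h ↦ by
    have := (Nat.prime_dvd_prime_iff_eq Nat.prime_three hp).mp h; omega
  omega

lemma isUnit_χ₆ {p : ℕ} (hp : p % 6 = 1 ∨ p % 6 = 5) : IsUnit (χ₆ p) := by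
  rcases hp with h | h <;> simp [χ₆, h]

lemma exists_even_three_mul_add_one_eq_χ₆_mul {p : ℕ} (hp : p % 6 = 1 ∨ p % 6 = 5) :
    ∃ c : ℤ, Even c ∧ 3 * c + 1 = χ₆ p * p := by
  rcases hp with h | h
  · exact ⟨2 * (p / 6 : ℕ), even_two_mul _, by rw [χ₆, if_pos h]; omega⟩
  · exact ⟨-2 * (p / 6 + 1 : ℕ), ⟨-(p / 6 + 1 : ℕ), by ring⟩,
      by rw [χ₆, if_neg (by omega), if_pos h]; omega⟩

/-- For every prime `p ≥ 5` and every `τ` in the upper half-plane,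
`(1/p)·Σ_{j=0}^{p−1} g₀((τ + 24j)/p) = p·χ₆(p)·g₀(pτ)`. -/
theorem g₀_Up_star (p : ℕ) (hp : p.Prime) (hp5 : 5 ≤ p) (τ : ℂ) (hτ : 0 < τ.im) :
    (1 / (p : ℂ)) * ∑ j ∈ Finset.range p, g₀ ((τ + 24 * (j : ℂ)) / (p : ℂ)) =
      (p : ℂ) * (χ₆ p : ℂ) * g₀ ((p : ℂ) * τ) := by
  have hp6 := hp.mod_six_eq_one_or_five hp5
  have hunit := isUnit_χ₆ hp6
  obtain ⟨c, hc_even, hc⟩ := exists_even_three_mul_add_one_eq_χ₆_mul hp6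
  have hsummable (j : ℕ) : Summable fun n ↦ g₀Term n ((τ + 24 * j) / p) :=
    summable_g₀Term (by rw [div_natCast_im, add_im]; simpa using div_pos hτ (by positivity))
  have hterm (k : ℤ) :
      g₀Term (χ₆ p * p * k + c) (τ / p) = (χ₆ p * p : ℤ) * g₀Term k (p * τ) := by
    rw [g₀Term_mul_add hc hc_even, Int.cast_mul, mul_pow, ← Int.cast_pow, Int.isUnit_sq hunit]
    push_cast
    field_simp
  calc (1 / (p : ℂ)) * ∑ j ∈ Finset.range p, g₀ ((τ + 24 * (j : ℂ)) / (p : ℂ))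
      = 1 / p * ∑' n : ℤ, ∑ j ∈ Finset.range p, g₀Term n ((τ + 24 * j) / p) := by
        rw [Summable.tsum_finsetSum fun j _ ↦ hsummable j]; rfl
    _ = 1 / p * ∑' n : ℤ, if χ₆ p * p ∣ 3 * n + 1 then p * g₀Term n (τ / p) else 0 := by
        simp_rw [sum_range_g₀Term_add_mul_div _ τ hp (by omega), hunit.mul_left_dvd]
    _ = 1 / p * ∑' k : ℤ, p * ((χ₆ p * p : ℤ) * g₀Term k (p * τ)) := by
        rw [tsum_ite_dvd_three_mul_add_one
          (mul_ne_zero hunit.ne_zero (by exact_mod_cast hp.ne_zero)) hc]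
        simp_rw [hterm]
    _ = p * χ₆ p * g₀ (p * τ) := by
        rw [tsum_mul_left, tsum_mul_left, g₀_eq_tsum_g₀Term]
        push_cast
        field_simp
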